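/- arXiv:1206.1143 — 2 statements merged into one kernel-verified Lean document; each statement's English description precedes it below -/
import Mathlib

section
/- There exists a constant C such that every vertex of the induced augmented tree (X, 𝔈) has at most C neighbours; in particular, (X, 𝔈) is a locally finite graph. -/
open Metric Set Filter

attribute [local instance] Classical.propDecidable

noncomputable section

namespace MoranPaper

/-- Points of `ℝ^d`. -/
abbrev Pt (d : ℕ) := EuclideanSpace ℝ (Fin d)

/-- `w` is an admissible word: the letter at (0-indexed) position `j`
(corresponding to step `j+1`) lies in `[1, n j]`, where `n j` encodes `n_{j+1}`. -/
def IsWord (n : ℕ → ℕ) (w : List ℕ) : Prop :=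
  ∀ j (h : j < w.length), 1 ≤ w.get ⟨j, h⟩ ∧ w.get ⟨j, h⟩ ≤ n j

/-- The set `D_k` of words of length `k`. -/
def WordsLen (n : ℕ → ℕ) (k : ℕ) : Set (List ℕ) := {w | IsWord n w ∧ w.length = k}

/-- A Moran structure on the data `(J, (n_k), (r_k))`:  a family of sets `J_w`
indexed by words, with `J_∅ = J`, each `J_w` a similar copy of `J`, children
contained in the parent with pairwise disjoint interiors, and prescribed
diameter ratios. -/
structure MoranStructure (d : ℕ) (J : Set (Pt d)) (n : ℕ → ℕ) (r : ℕ → ℝ) where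
  Jset : List ℕ → Set (Pt d)
  root_eq : Jset [] = J
  similar : ∀ w, IsWord n w → ∃ (S : Pt d → Pt d) (c : ℝ), 0 < c ∧
      (∀ x y, dist (S x) (S y) = c * dist x y) ∧ Jset w = S '' J
  nested : ∀ w, IsWord n w → ∀ a, 1 ≤ a → a ≤ n w.length →
      Jset (w ++ [a]) ⊆ Jset w
  disjoint_int : ∀ w, IsWord n w → ∀ a b, 1 ≤ a → a ≤ n w.length →
      1 ≤ b → b ≤ n w.length → a ≠ b →
      interior (Jset (w ++ [a])) ∩ interior (Jset (w ++ [b])) = ∅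
  diam_ratio : ∀ w, IsWord n w → ∀ a, 1 ≤ a → a ≤ n w.length →
      Metric.diam (Jset (w ++ [a])) = r w.length * Metric.diam (Jset w)

/-- Standing hypotheses on the Moran data; `R` plays the role of `r = inf_k r_k > 0`. -/
structure MoranData (d : ℕ) (J : Set (Pt d)) (n : ℕ → ℕ) (r : ℕ → ℝ) (R : ℝ) : Prop where
  dim_pos : 1 ≤ d
  compact : IsCompact J
  int_nonempty : (interior J).Nonempty
  two_le : ∀ k, 2 ≤ n k
  r_pos : ∀ k, 0 < r k
  r_lt_one : ∀ k, r k < 1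
  nr_le : ∀ k, (n k : ℝ) * r k ≤ 1
  R_pos : 0 < R
  R_inf : R = ⨅ k, r k

/-- The Moran set `E = ⋂_k ⋃_{w ∈ D_k} J_w`. -/
def MoranSet {d : ℕ} {J : Set (Pt d)} {n : ℕ → ℕ} {r : ℕ → ℝ}
    (M : MoranStructure d J n r) : Set (Pt d) :=
  ⋂ k, ⋃ w ∈ WordsLen n k, M.Jset w

/-- The product `r_1 ⋯ r_k`. -/
def prodR (r : ℕ → ℝ) (k : ℕ) : ℝ := ∏ j ∈ Finset.range k, r j

/-- The level `X_m`:  `X_0 = {∅}`, and for `m ≥ 1`,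
`X_m = {w : r_1⋯r_k ≤ R^m < r_1⋯r_{k-1}}` where `k` is the length of `w`. -/
def XLevel (n : ℕ → ℕ) (r : ℕ → ℝ) (R : ℝ) (m : ℕ) : Set (List ℕ) :=
  if m = 0 then {([] : List ℕ)}
  else {w | IsWord n w ∧ prodR r w.length ≤ R ^ m ∧ R ^ m < prodR r (w.length - 1)}

/-- The vertex set `X = ⋃_m X_m`. -/
def XV (n : ℕ → ℕ) (r : ℕ → ℝ) (R : ℝ) : Set (List ℕ) := ⋃ m, XLevel n r R m

/-- `v` is the parent (first ancestor) of `u`:  `v` is the initial segment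
of `u` lying one level above `u`. -/
def IsParent (n : ℕ → ℕ) (r : ℕ → ℝ) (R : ℝ) (v u : List ℕ) : Prop :=
  v ≠ u ∧ v <+: u ∧ ∃ m, 1 ≤ m ∧ u ∈ XLevel n r R m ∧ v ∈ XLevel n r R (m - 1)

/-- Vertical edge relation `𝔈_v` (as an unordered relation). -/
def Evert (n : ℕ → ℕ) (r : ℕ → ℝ) (R : ℝ) (u v : List ℕ) : Prop :=
  IsParent n r R u v ∨ IsParent n r R v u

variable {d : ℕ} {J : Set (Pt d)} {n : ℕ → ℕ} {r : ℕ → ℝ}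

/-- Horizontal edge relation `𝔈_h`: distinct words on a common level `X_m`, `m ≥ 1`,
whose Moran pieces intersect. -/
def Ehor (M : MoranStructure d J n r) (R : ℝ) (u v : List ℕ) : Prop :=
  u ≠ v ∧ ∃ m, 1 ≤ m ∧ u ∈ XLevel n r R m ∧ v ∈ XLevel n r R m ∧
    (M.Jset u ∩ M.Jset v).Nonempty

/-- The induced augmented tree `(X, 𝔈)`, `𝔈 = 𝔈_v ∪ 𝔈_h`, as a graph on all words
(words outside `X` are isolated vertices). -/
def AugGraph (M : MoranStructure d J n r) (R : ℝ) : SimpleGraph (List ℕ) where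
  Adj u v := Evert n r R u v ∨ Ehor M R u v
  symm := ⟨by
    rintro u v (h | ⟨hne, m, hm, hu, hv, hJ⟩)
    · exact Or.inl h.symm
    · exact Or.inr ⟨hne.symm, m, hm, hv, hu, by rwa [Set.inter_comm]⟩⟩
  loopless := ⟨by
    rintro u ((⟨h, -⟩ | ⟨h, -⟩) | ⟨h, -⟩) <;> exact h rfl⟩

/-- The tree `(X, 𝔈_v)` with only the vertical edges. -/
def TreeGraph (n : ℕ → ℕ) (r : ℕ → ℝ) (R : ℝ) : SimpleGraph (List ℕ) where
  Adj u v := Evert n r R u v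
  symm := ⟨fun _ _ h => h.symm⟩
  loopless := ⟨by rintro u (⟨h, -⟩ | ⟨h, -⟩) <;> exact h rfl⟩

/-- The graph `(X, 𝔈_h)` with only the horizontal edges. -/
def HorGraph (M : MoranStructure d J n r) (R : ℝ) : SimpleGraph (List ℕ) where
  Adj u v := Ehor M R u v
  symm := ⟨by
    rintro u v ⟨hne, m, hm, hu, hv, hJ⟩
    exact ⟨hne.symm, m, hm, hv, hu, by rwa [Set.inter_comm]⟩⟩
  loopless := ⟨by rintro u ⟨h, -⟩; exact h rfl⟩

/-- Gromov product `⟨x,y⟩ = (d(o,x) + d(o,y) - d(x,y))/2` with respect to a base point `o`. -/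
def gromovD {V : Type*} (G : SimpleGraph V) (o x y : V) : ℝ :=
  ((G.dist o x : ℝ) + (G.dist o y : ℝ) - (G.dist x y : ℝ)) / 2

/-- Condition (H): there is `C' > 0` such that on every level `X_m` (`m ≥ 1`),
two pieces either intersect or are at distance at least `C' R^m`. -/
def CondH (M : MoranStructure d J n r) (R : ℝ) : Prop :=
  ∃ C' : ℝ, 0 < C' ∧ ∀ m, 1 ≤ m → ∀ u ∈ XLevel n r R m, ∀ v ∈ XLevel n r R m,
    (M.Jset u ∩ M.Jset v).Nonempty ∨
    ∀ p ∈ M.Jset u, ∀ q ∈ M.Jset v, C' * R ^ m ≤ dist p q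

/-- `T` is a horizontal connected component: a maximal subset of some level `X_m`
which is connected in the horizontal graph. -/
def IsHCC (M : MoranStructure d J n r) (R : ℝ) (T : Set (List ℕ)) : Prop :=
  ∃ m, T ⊆ XLevel n r R m ∧ ((HorGraph M R).induce T).Connected ∧
    ∀ T', T ⊆ T' → T' ⊆ XLevel n r R m → ((HorGraph M R).induce T').Connected → T' = T

/-- The common suffix set `Σ_m` of the level `X_m`: words `w` with `uw ∈ X_{m+1}`
for (some, equivalently all) `u ∈ X_m`. -/
def SigmaSet (n : ℕ → ℕ) (r : ℕ → ℝ) (R : ℝ) (m : ℕ) : Set (List ℕ) :=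
  {w | ∃ u ∈ XLevel n r R m, u ++ w ∈ XLevel n r R (m + 1)}

/-- The offspring set `TΣ_m ⊆ X_{m+1}` of a set `T ⊆ X_m`. -/
def TSigma (n : ℕ → ℕ) (r : ℕ → ℝ) (R : ℝ) (m : ℕ) (T : Set (List ℕ)) : Set (List ℕ) :=
  {x | ∃ u ∈ T, ∃ w ∈ SigmaSet n r R m, x = u ++ w}

/-- The augmented tree is rearrangeable:  horizontal connected components have
uniformly bounded cardinality, and for every horizontal connected component `T ⊆ X_m`
with `#T = b`, the offspring set `TΣ_m` can be partitioned into `b` groups (indexed by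
the elements of `T`), each group being a union of horizontal connected components and
having exactly `#Σ_m` elements. -/
def Rearrangeable (M : MoranStructure d J n r) (R : ℝ) : Prop :=
  (∃ L : ℕ, ∀ T, IsHCC M R T → T.Finite ∧ T.ncard ≤ L) ∧
  ∀ m T, T ⊆ XLevel n r R m → IsHCC M R T →
    ∃ g : List ℕ → List ℕ,
      (∀ x ∈ TSigma n r R m T, g x ∈ T) ∧
      (∀ Z, IsHCC M R Z → Z ⊆ TSigma n r R m T → ∀ x ∈ Z, ∀ y ∈ Z, g x = g y) ∧
      (∀ i ∈ T, {x ∈ TSigma n r R m T | g x = i}.ncard = (SigmaSet n r R m).ncard)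

/-- `C` is a (topological) connected component of `A`. -/
def IsRelCC {α : Type*} [TopologicalSpace α] (C A : Set α) : Prop :=
  ∃ x ∈ A, C = connectedComponentIn A x

/-- Condition (v): there is `L` such that any `T ⊆ D_{k-1}` for which `⋃_{i∈T} J_i`
is a connected component of `⋃_{i∈D_{k-1}} J_i` satisfies `#T ≤ L`. -/
def CondV (M : MoranStructure d J n r) : Prop :=
  ∃ L : ℕ, ∀ k, 1 ≤ k → ∀ T ⊆ WordsLen n (k - 1),
    IsRelCC (⋃ i ∈ T, M.Jset i) (⋃ i ∈ WordsLen n (k - 1), M.Jset i) →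
    T.Finite ∧ T.ncard ≤ L

/-- Condition (vi): for any such `T` (with `#T = b`), the connected components of
`⋃_{i∈T} ⋃_{j=1}^{n_k} J_{ij}` can be partitioned into `b` groups (indexed by the
elements of `T`) so that the union of the components in each group is a union of
exactly `n_k` of the sets `J_{ij}`. -/
def CondVI (M : MoranStructure d J n r) : Prop :=
  ∀ k, 1 ≤ k → ∀ T ⊆ WordsLen n (k - 1),
    IsRelCC (⋃ i ∈ T, M.Jset i) (⋃ i ∈ WordsLen n (k - 1), M.Jset i) →
    ∃ f : Set (Pt d) → List ℕ,
      (∀ C, IsRelCC C (⋃ u ∈ T, ⋃ j ∈ Set.Icc 1 (n (k - 1)), M.Jset (u ++ [j])) → f C ∈ T) ∧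
      ∀ i ∈ T, ∃ W : Finset (List ℕ × ℕ),
        (∀ p ∈ W, p.1 ∈ T ∧ 1 ≤ p.2 ∧ p.2 ≤ n (k - 1)) ∧
        W.card = n (k - 1) ∧
        (⋃ C ∈ {C | IsRelCC C (⋃ u ∈ T, ⋃ j ∈ Set.Icc 1 (n (k - 1)), M.Jset (u ++ [j]))
            ∧ f C = i}, C)
          = ⋃ p ∈ W, M.Jset (p.1 ++ [p.2])

/-- A geodesic ray of the induced augmented tree: `u_m ∈ X_m` and `u_m = (u_{m+1})⁻¹`. -/
def IsRay (n : ℕ → ℕ) (r : ℕ → ℝ) (R : ℝ) (u : ℕ → List ℕ) : Prop :=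
  (∀ m, u m ∈ XLevel n r R m) ∧ ∀ m, IsParent n r R (u m) (u (m + 1))

/-- Geodesic rays as a type. -/
def MRay (n : ℕ → ℕ) (r : ℕ → ℝ) (R : ℝ) := {u : ℕ → List ℕ // IsRay n r R u}

/-- `t(ξ,η) = liminf_m ⟨u_m, v_m⟩`, valued in `EReal`. -/
def tLim {V : Type*} (G : SimpleGraph V) (o : V) (u v : ℕ → V) : EReal :=
  Filter.liminf (fun m => ((gromovD G o (u m) (v m) : ℝ) : EReal)) Filter.atTop

/-- `R ^ t` for `t ∈ EReal`, with the convention `R ^ ∞ = 0`. -/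
def rpowE (R : ℝ) (t : EReal) : ℝ := if t = ⊤ then 0 else R ^ t.toReal

/-- The hyperbolic boundary of the induced augmented tree: equivalence classes of
geodesic rays, two rays being equivalent when `t(ξ,η) = ∞`. -/
def MBoundary (M : MoranStructure d J n r) (R : ℝ) :=
  Quot (fun ξ η : MRay n r R => tLim (AugGraph M R) [] ξ.1 η.1 = ⊤)

/-- The class of a ray in the hyperbolic boundary. -/
def mkB (M : MoranStructure d J n r) (R : ℝ) (ξ : MRay n r R) : MBoundary M R :=
  Quot.mk _ ξ

/-- The metric `ρ_a` on the hyperbolic boundary: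
`ρ_a(ξ̄,η̄) = exp(-a · inf{t(ξ,η) : ξ ∈ ξ̄, η ∈ η̄})` for distinct classes, and `0` otherwise. -/
def mrho (M : MoranStructure d J n r) (R a : ℝ) (p q : MBoundary M R) : ℝ :=
  if p = q then 0
  else Real.exp (-a * (sInf {s : EReal | ∃ ξ η : MRay n r R,
    mkB M R ξ = p ∧ mkB M R η = q ∧ s = tLim (AugGraph M R) [] ξ.1 η.1}).toReal)

/-- An abstract augmented tree in the sense of Kaimanovich: a rooted tree (encoded
by a parent map and a level function) together with a symmetric horizontal edge
relation `Eh` joining distinct vertices of a common level whose parents are equal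
or horizontally joined. -/
structure AugmentedTree (V : Type*) where
  root : V
  parent : V → V
  lvl : V → ℕ
  lvl_root : lvl root = 0
  lvl_parent : ∀ x, x ≠ root → lvl (parent x) + 1 = lvl x
  Eh : V → V → Prop
  Eh_symm : ∀ x y, Eh x y → Eh y x
  Eh_ne : ∀ x y, Eh x y → x ≠ y
  Eh_lvl : ∀ x y, Eh x y → lvl x = lvl y
  Eh_parent : ∀ x y, Eh x y → parent x = parent y ∨ Eh (parent x) (parent y)

namespace AugmentedTree

variable {V : Type*} (T : AugmentedTree V)

/-- The vertical (tree) edge relation. -/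
def Ev (x y : V) : Prop :=
  (x ≠ T.root ∧ T.parent x = y) ∨ (y ≠ T.root ∧ T.parent y = x)

/-- The graph `(X, 𝔈)`, `𝔈 = 𝔈_v ∪ 𝔈_h`. -/
def graph : SimpleGraph V where
  Adj x y := x ≠ y ∧ (T.Ev x y ∨ T.Eh x y)
  symm := ⟨by
    rintro x y ⟨hne, h | h⟩
    · exact ⟨hne.symm, Or.inl h.symm⟩
    · exact ⟨hne.symm, Or.inr (T.Eh_symm x y h)⟩⟩
  loopless := ⟨fun _ h => h.1 rfl⟩

/-- Gromov product `⟨x,y⟩ = (|x| + |y| - d(x,y))/2` (one has `d(o,x) = |x| = lvl x`). -/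
def gromov (x y : V) : ℝ :=
  ((T.lvl x : ℝ) + (T.lvl y : ℝ) - (T.graph.dist x y : ℝ)) / 2

/-- Gromov hyperbolicity. -/
def Hyperbolic : Prop :=
  ∃ δ : ℝ, 0 ≤ δ ∧ ∀ x y z : V,
    min (T.gromov x z) (T.gromov z y) - δ ≤ T.gromov x y

/-- A geodesic ray from the root: `x_0 = o` and `x_m = (x_{m+1})⁻¹`. -/
def IsRayT (x : ℕ → V) : Prop := x 0 = T.root ∧ ∀ m, T.parent (x (m + 1)) = x m

/-- Geodesic rays from the root, as a type. -/
def Ray := {x : ℕ → V // T.IsRayT x}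

/-- `t(ξ,η) = liminf_m ⟨x_m, y_m⟩`, valued in `EReal`. -/
def tvalT (ξ η : T.Ray) : EReal :=
  Filter.liminf (fun m => ((T.gromov (ξ.1 m) (η.1 m) : ℝ) : EReal)) Filter.atTop

/-- The hyperbolic boundary: classes of geodesic rays, two rays being equivalent
when `t(ξ,η) = ∞`. -/
def Boundary := Quot (fun ξ η : T.Ray => T.tvalT ξ η = ⊤)

/-- The class of a ray in the boundary. -/
def mkBd (ξ : T.Ray) : T.Boundary := Quot.mk _ ξ

/-- The metric `ρ_a` on the hyperbolic boundary. -/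
def rho (a : ℝ) (p q : T.Boundary) : ℝ :=
  if p = q then 0
  else Real.exp (-a * (sInf {s : EReal | ∃ ξ η : T.Ray,
    T.mkBd ξ = p ∧ T.mkBd η = q ∧ s = T.tvalT ξ η}).toReal)

end AugmentedTree

end MoranPaper

end

/-! A vertex `x ∈ X_m` has at most one parent; its other neighbours are its children, which lie
in `X_{m+1}` and inside `J_x`, and its horizontal neighbours, which lie in `X_m` and meet `J_x`.
The pieces of one level `X_k` have pairwise disjoint interiors, and each is a similar copy of `J`
with ratio `r_1 ⋯ r_{|u|} ∈ (R^{k+1}, R^k]`, so it contains a ball of radius `≍ R^k`; all the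
neighbours' pieces lie in a ball of radius `≍ R^m` around a point of `J_x`. Comparing volumes
bounds their number by a constant independent of `m`. -/

open Metric Set MeasureTheory Module

section BallPacking

variable {ι E : Type*} [NormedAddCommGroup E] [NormedSpace ℝ E] [FiniteDimensional ℝ E]
  [MeasurableSpace E] [BorelSpace E]

theorem Finset.card_mul_pow_le_of_pairwiseDisjoint_ball {F : Finset ι} {c : ι → E} {p : E}
    {a b : ℝ} (ha : 0 < a) (hb : 0 ≤ b)
    (hdisj : (F : Set ι).PairwiseDisjoint fun i => ball (c i) a)
    (hsub : ∀ i ∈ F, ball (c i) a ⊆ closedBall p b) :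
    (F.card : ℝ) * a ^ finrank ℝ E ≤ b ^ finrank ℝ E := by
  let μ : Measure E := Measure.addHaar
  have hvol : (F.card : ENNReal) * μ (ball 0 a) ≤ μ (closedBall p b) :=
    calc (F.card : ENNReal) * μ (ball 0 a) = ∑ i ∈ F, μ (ball (c i) a) := by
          simp [Measure.addHaar_ball_center]
      _ = μ (⋃ i ∈ F, ball (c i) a) :=
          (measure_biUnion_finset hdisj fun _ _ => measurableSet_ball).symm
      _ ≤ μ (closedBall p b) := measure_mono (iUnion₂_subset hsub)
  rw [Measure.addHaar_ball_of_pos μ 0 ha, Measure.addHaar_closedBall μ p hb, ← mul_assoc,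
    ENNReal.mul_le_mul_iff_left (measure_ball_pos μ 0 one_pos).ne' measure_ball_lt_top.ne,
    ← ENNReal.ofReal_natCast, ← ENNReal.ofReal_mul (Nat.cast_nonneg _),
    ENNReal.ofReal_le_ofReal_iff (by positivity)] at hvol
  exact hvol

theorem Set.finite_and_ncard_le_of_pairwiseDisjoint_ball {A : Set ι} {c : ι → E} {p : E}
    {a b : ℝ} (ha : 0 < a) (hb : 0 ≤ b) (hdisj : A.PairwiseDisjoint fun i => ball (c i) a)
    (hsub : ∀ i ∈ A, ball (c i) a ⊆ closedBall p b) :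
    A.Finite ∧ A.ncard ≤ ⌊(b / a) ^ finrank ℝ E⌋₊ := by
  have hcard : ∀ F : Finset ι, ↑F ⊆ A → F.card ≤ ⌊(b / a) ^ finrank ℝ E⌋₊ := fun F hF =>
    Nat.le_floor <| by
      rw [div_pow, le_div_iff₀ (by positivity)]
      exact Finset.card_mul_pow_le_of_pairwiseDisjoint_ball ha hb (hdisj.subset hF)
        fun i hi => hsub i (hF hi)
  have hfin : A.Finite := by
    by_contra hinf
    obtain ⟨F, hF, hFcard⟩ :=
      Set.Infinite.exists_subset_card_eq hinf (⌊(b / a) ^ finrank ℝ E⌋₊ + 1)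
    have := hcard F hF
    omega
  refine ⟨hfin, ?_⟩
  rw [Set.ncard_eq_toFinset_card A hfin]
  exact hcard _ (by simp)

end BallPacking

section Similarity

variable {E : Type*} [NormedAddCommGroup E] [NormedSpace ℝ E] [StrictConvexSpace ℝ E]
  [FiniteDimensional ℝ E] {S : E → E} {c : ℝ}

theorem exists_affineIsometryEquiv_of_dist_eq_mul (hc : 0 < c)
    (hS : ∀ x y, dist (S x) (S y) = c * dist x y) :
    ∃ T : E ≃ᵃⁱ[ℝ] E, ∀ x, S x = c • T x := by
  have hT : Isometry fun x => c⁻¹ • S x := Isometry.of_dist_eq fun x y => by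
    rw [dist_smul₀, hS, norm_inv, Real.norm_of_nonneg hc.le, inv_mul_cancel_left₀ hc.ne']
  have : Inhabited E := ⟨0⟩
  exact ⟨hT.affineIsometryOfStrictConvexSpace.toAffineIsometryEquiv rfl,
    fun x => by simp [smul_inv_smul₀ hc.ne']⟩

theorem image_ball_of_dist_eq_mul (hc : 0 < c) (hS : ∀ x y, dist (S x) (S y) = c * dist x y)
    (x : E) (ρ : ℝ) : S '' ball x ρ = ball (S x) (c * ρ) := by
  obtain ⟨T, hT⟩ := exists_affineIsometryEquiv_of_dist_eq_mul hc hS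
  have : S = (c • ·) ∘ T := funext hT
  rw [this, image_comp, ← T.coe_toIsometryEquiv, IsometryEquiv.image_ball,
    Metric.smul_image_ball hc.ne', Real.norm_of_nonneg hc.le]
  rfl

theorem diam_image_of_dist_eq_mul (hc : 0 < c) (hS : ∀ x y, dist (S x) (S y) = c * dist x y)
    (s : Set E) : diam (S '' s) = c * diam s := by
  obtain ⟨T, hT⟩ := exists_affineIsometryEquiv_of_dist_eq_mul hc hS
  have : S = (c • ·) ∘ T := funext hT
  rw [this, image_comp, Set.image_smul, diam_smul₀, T.diam_image, Real.norm_of_nonneg hc.le]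

end Similarity

theorem List.exists_eq_append_cons_of_not_prefix {α : Type*} :
    ∀ u v : List α, ¬ u <+: v → ¬ v <+: u →
      ∃ w a b s t, a ≠ b ∧ u = w ++ a :: s ∧ v = w ++ b :: t
  | [], _, h, _ => absurd List.nil_prefix h
  | _ :: _, [], _, h => absurd List.nil_prefix h
  | x :: u, y :: v, h₁, h₂ => by
    by_cases hxy : x = y
    · subst hxy
      obtain ⟨w, a, b, s, t, hab, rfl, rfl⟩ := exists_eq_append_cons_of_not_prefix u v
        (fun h => h₁ (List.cons_prefix_cons.mpr ⟨rfl, h⟩))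
        (fun h => h₂ (List.cons_prefix_cons.mpr ⟨rfl, h⟩))
      exact ⟨x :: w, a, b, s, t, hab, rfl, rfl⟩
    · exact ⟨[], x, y, u, v, hxy, rfl, rfl⟩

namespace MoranPaper

open Bornology

variable {d : ℕ} {J : Set (Pt d)} {n : ℕ → ℕ} {r : ℕ → ℝ} {R : ℝ}

section Words

theorem IsWord.of_prefix {u v : List ℕ} (hv : IsWord n v) (h : u <+: v) : IsWord n u := by
  obtain ⟨t, rfl⟩ := h
  intro j hj
  simpa [List.getElem_append_left hj] using hv j (by simp only [List.length_append]; omega)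

theorem IsWord.letter_bounds {w t : List ℕ} {a : ℕ} (h : IsWord n (w ++ a :: t)) :
    1 ≤ a ∧ a ≤ n w.length := by
  simpa using h w.length (by simp)

end Words

section Pieces

variable (M : MoranStructure d J n r)

theorem Jset_append_subset {w t : List ℕ} (h : IsWord n (w ++ t)) :
    M.Jset (w ++ t) ⊆ M.Jset w := by
  induction t using List.reverseRecOn with
  | nil => simp
  | append_singleton t a ih =>
    rw [← List.append_assoc] at h ⊢
    have hwt : IsWord n (w ++ t) := h.of_prefix ⟨[a], rfl⟩
    exact (M.nested _ hwt a h.letter_bounds.1 h.letter_bounds.2).trans (ih hwt)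

theorem Jset_subset {u : List ℕ} (hu : IsWord n u) : M.Jset u ⊆ J := by
  simpa [M.root_eq] using Jset_append_subset M (w := []) hu

theorem disjoint_interior_Jset {u v : List ℕ} (hu : IsWord n u) (hv : IsWord n v)
    (huv : ¬ u <+: v) (hvu : ¬ v <+: u) :
    Disjoint (interior (M.Jset u)) (interior (M.Jset v)) := by
  obtain ⟨w, a, b, s, t, hab, rfl, rfl⟩ := List.exists_eq_append_cons_of_not_prefix u v huv hvu
  have hw : IsWord n w := hu.of_prefix ⟨a :: s, rfl⟩
  have hsub : ∀ {c x}, IsWord n (w ++ c :: x) → M.Jset (w ++ c :: x) ⊆ M.Jset (w ++ [c]) :=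
    fun {c x} h => by
      rw [List.append_cons] at h ⊢
      exact Jset_append_subset M h
  rw [Set.disjoint_iff_inter_eq_empty]
  exact Set.subset_eq_empty (inter_subset_inter (interior_mono (hsub hu))
    (interior_mono (hsub hv))) (M.disjoint_int w hw a b hu.letter_bounds.1 hu.letter_bounds.2
      hv.letter_bounds.1 hv.letter_bounds.2 hab)

theorem diam_Jset {u : List ℕ} (hu : IsWord n u) :
    diam (M.Jset u) = prodR r u.length * diam J := by
  induction u using List.reverseRecOn with
  | nil => simp [M.root_eq, prodR]
  | append_singleton w a ih =>
    have hw : IsWord n w := hu.of_prefix ⟨[a], rfl⟩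
    rw [M.diam_ratio w hw a hu.letter_bounds.1 hu.letter_bounds.2, ih hw]
    simp only [prodR, List.length_append, List.length_singleton, Finset.prod_range_succ]
    ring

theorem exists_ball_subset_Jset (hΔ : 0 < diam J) {x₀ : Pt d} {ρ : ℝ}
    (hball : ball x₀ ρ ⊆ J) {u : List ℕ} (hu : IsWord n u) :
    ∃ y, ball y (prodR r u.length * ρ) ⊆ M.Jset u := by
  obtain ⟨S, c, hc, hS, hSJ⟩ := M.similar u hu
  have hcu : c = prodR r u.length := by
    have h := diam_image_of_dist_eq_mul hc hS J
    rw [← hSJ, diam_Jset M hu] at h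
    exact (mul_right_cancel₀ hΔ.ne' h).symm
  refine ⟨S x₀, ?_⟩
  rw [← hcu, ← image_ball_of_dist_eq_mul hc hS, hSJ]
  exact image_mono hball

end Pieces

section Levels

theorem prodR_pos (hr : ∀ k, 0 < r k) (k : ℕ) : 0 < prodR r k :=
  Finset.prod_pos fun j _ => hr j

theorem MoranData.R_le (hD : MoranData d J n r R) (k : ℕ) : R ≤ r k := by
  rw [hD.R_inf]
  exact ciInf_le ⟨0, by rintro x ⟨j, rfl⟩; exact (hD.r_pos j).le⟩ k

theorem MoranData.R_lt_one (hD : MoranData d J n r R) : R < 1 :=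
  (hD.R_le 0).trans_lt (hD.r_lt_one 0)

theorem MoranData.prodR_antitone (hD : MoranData d J n r R) : Antitone (prodR r) :=
  antitone_nat_of_succ_le fun k => by
    rw [prodR, Finset.prod_range_succ]
    exact mul_le_of_le_one_right (prodR_pos hD.r_pos k).le (hD.r_lt_one k).le

theorem MoranData.diam_pos (hD : MoranData d J n r R) : 0 < diam J := by
  have : Nontrivial (Pt d) :=
    Module.nontrivial_of_finrank_pos (R := ℝ)
      (by rw [finrank_euclideanSpace_fin]; exact hD.dim_pos)
  obtain ⟨x₀, hx₀⟩ := hD.int_nonempty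
  exact Metric.diam_pos (infinite_of_mem_nhds x₀ (mem_interior_iff_mem_nhds.mp hx₀)).nontrivial
    hD.compact.isBounded

theorem MoranData.exists_ball_subset (hD : MoranData d J n r R) :
    ∃ x₀ ρ, 0 < ρ ∧ ball x₀ ρ ⊆ J := by
  obtain ⟨x₀, hx₀⟩ := hD.int_nonempty
  obtain ⟨ρ, hρ, hball⟩ := isOpen_iff.mp isOpen_interior x₀ hx₀
  exact ⟨x₀, ρ, hρ, hball.trans interior_subset⟩

theorem eq_nil_of_mem_XLevel_zero {u : List ℕ} (hu : u ∈ XLevel n r R 0) : u = [] := by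
  simpa [XLevel] using hu

theorem MoranData.of_mem_XLevel (hD : MoranData d J n r R) {m : ℕ} (hm : m ≠ 0)
    {u : List ℕ} (hu : u ∈ XLevel n r R m) :
    IsWord n u ∧ 0 < u.length ∧ prodR r u.length ≤ R ^ m ∧ R ^ m < prodR r (u.length - 1) := by
  rw [XLevel, if_neg hm] at hu
  obtain ⟨hw, hle, hlt⟩ := hu
  refine ⟨hw, Nat.pos_of_ne_zero fun h0 => ?_, hle, hlt⟩
  rw [h0, prodR, Finset.prod_range_zero] at hle
  exact (pow_lt_one₀ hD.R_pos.le hD.R_lt_one hm).not_ge hle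

theorem MoranData.isWord_and_prodR_le_of_mem_XLevel (hD : MoranData d J n r R) {m : ℕ}
    {u : List ℕ} (hu : u ∈ XLevel n r R m) : IsWord n u ∧ prodR r u.length ≤ R ^ m := by
  rcases eq_or_ne m 0 with rfl | hm
  · obtain rfl := eq_nil_of_mem_XLevel_zero hu
    exact ⟨fun j hj => absurd hj (by simp), by simp [prodR]⟩
  · obtain ⟨hw, -, hle, -⟩ := hD.of_mem_XLevel hm hu
    exact ⟨hw, hle⟩

theorem MoranData.pow_succ_lt_prodR (hD : MoranData d J n r R) {m : ℕ} (hm : m ≠ 0)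
    {u : List ℕ} (hu : u ∈ XLevel n r R m) : R ^ (m + 1) < prodR r u.length := by
  obtain ⟨-, hpos, -, hlt⟩ := hD.of_mem_XLevel hm hu
  obtain ⟨k, hk⟩ := Nat.exists_eq_add_one_of_ne_zero hpos.ne'
  rw [hk, Nat.add_sub_cancel] at hlt
  rw [hk, prodR, Finset.prod_range_succ, ← prodR, pow_succ]
  calc R ^ m * R < prodR r k * R := mul_lt_mul_of_pos_right hlt hD.R_pos
    _ ≤ prodR r k * r k := mul_le_mul_of_nonneg_left (hD.R_le k) (prodR_pos hD.r_pos k).le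

theorem MoranData.level_eq_of_mem (hD : MoranData d J n r R) {u : List ℕ} {m₁ m₂ : ℕ}
    (h₁ : u ∈ XLevel n r R m₁) (h₂ : u ∈ XLevel n r R m₂) : m₁ = m₂ := by
  wlog hlt : m₁ < m₂ generalizing m₁ m₂
  · rcases (not_lt.mp hlt).lt_or_eq with h | h
    · exact (this h₂ h₁ h).symm
    · exact h.symm
  have hm₂ : m₂ ≠ 0 := by omega
  rcases eq_or_ne m₁ 0 with rfl | hm₁
  · obtain rfl := eq_nil_of_mem_XLevel_zero h₁
    exact absurd (hD.of_mem_XLevel hm₂ h₂).2.1 (by simp)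
  · have := hD.pow_succ_lt_prodR hm₁ h₁
    have := (hD.of_mem_XLevel hm₂ h₂).2.2.1
    have := pow_le_pow_of_le_one hD.R_pos.le hD.R_lt_one.le (by omega : m₁ + 1 ≤ m₂)
    linarith

theorem MoranData.eq_of_prefix_of_mem_XLevel (hD : MoranData d J n r R) {u v : List ℕ}
    {m₁ m₂ : ℕ} (hm₁ : m₁ ≠ 0) (hm : m₂ ≤ m₁) (hu : u ∈ XLevel n r R m₁)
    (hv : v ∈ XLevel n r R m₂)
    (huv : u <+: v) : u = v := by
  rcases eq_or_ne m₂ 0 with rfl | hm₂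
  · obtain rfl := eq_nil_of_mem_XLevel_zero hv
    exact List.prefix_nil.mp huv
  by_contra hne
  have hlen : u.length ≤ v.length - 1 := by
    have hne' : u.length ≠ v.length := fun h => hne (huv.eq_of_length h)
    have := huv.length_le
    omega
  have := hD.prodR_antitone hlen
  have := (hD.of_mem_XLevel hm₁ hu).2.2.1
  have := (hD.of_mem_XLevel hm₂ hv).2.2.2
  have := pow_le_pow_of_le_one hD.R_pos.le hD.R_lt_one.le hm
  linarith

end Levels

section Neighbours

theorem neighborSet_augGraph (M : MoranStructure d J n r) (x : List ℕ) :
    (AugGraph M R).neighborSet x =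
      {y | IsParent n r R x y} ∪ {y | IsParent n r R y x} ∪ {y | Ehor M R x y} :=
  rfl

theorem MoranData.parents_finite_and_ncard_le_one (hD : MoranData d J n r R) (x : List ℕ) :
    {y | IsParent n r R y x}.Finite ∧ {y | IsParent n r R y x}.ncard ≤ 1 := by
  suffices h : {y | IsParent n r R y x}.Subsingleton by
    have := h.finite.to_subtype
    exact ⟨h.finite, Set.ncard_le_one_iff_subsingleton.mpr h⟩
  rintro y₁ ⟨-, hy₁x, m₁, -, hx₁, hy₁⟩ y₂ ⟨-, hy₂x, m₂, -, hx₂, hy₂⟩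
  obtain rfl := hD.level_eq_of_mem hx₁ hx₂
  rcases eq_or_ne (m₁ - 1) 0 with h0 | h0
  · rw [h0] at hy₁ hy₂
    rw [eq_nil_of_mem_XLevel_zero hy₁, eq_nil_of_mem_XLevel_zero hy₂]
  · rcases List.prefix_or_prefix_of_prefix hy₁x hy₂x with h | h
    · exact hD.eq_of_prefix_of_mem_XLevel h0 le_rfl hy₁ hy₂ h
    · exact (hD.eq_of_prefix_of_mem_XLevel h0 le_rfl hy₂ hy₁ h).symm

variable {x₀ : Pt d} {ρ : ℝ} {x : List ℕ} {m : ℕ}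

theorem MoranData.mem_XLevel_of_isParent (hD : MoranData d J n r R) {y : List ℕ}
    (hx : x ∈ XLevel n r R m) (h : IsParent n r R x y) :
    y ∈ XLevel n r R (m + 1) ∧ x <+: y := by
  obtain ⟨-, hxy, k, hk, hy, hx'⟩ := h
  obtain rfl : k - 1 = m := hD.level_eq_of_mem hx' hx
  rw [Nat.sub_add_cancel hk]
  exact ⟨hy, hxy⟩

theorem MoranData.mem_XLevel_of_ehor (hD : MoranData d J n r R)
    (M : MoranStructure d J n r) {y : List ℕ}
    (hx : x ∈ XLevel n r R m) (h : Ehor M R x y) :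
    m ≠ 0 ∧ y ∈ XLevel n r R m ∧ (M.Jset x ∩ M.Jset y).Nonempty := by
  obtain ⟨-, k, hk, hx', hy, hxy⟩ := h
  obtain rfl := hD.level_eq_of_mem hx' hx
  exact ⟨by omega, hy, hxy⟩

theorem MoranData.Jset_subset_closedBall (hD : MoranData d J n r R)
    (M : MoranStructure d J n r) (hx : x ∈ XLevel n r R m)
    {p : Pt d} (hp : p ∈ M.Jset x) : M.Jset x ⊆ closedBall p (diam J * R ^ m) := by
  obtain ⟨hw, hle⟩ := hD.isWord_and_prodR_le_of_mem_XLevel hx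
  have hJx : IsBounded (M.Jset x) := hD.compact.isBounded.subset (Jset_subset M hw)
  intro z hz
  calc dist z p ≤ diam (M.Jset x) := dist_le_diam_of_mem hJx hz hp
    _ = prodR r x.length * diam J := diam_Jset M hw
    _ ≤ diam J * R ^ m := by rw [mul_comm]; gcongr

theorem MoranData.finite_and_ncard_le_of_subset_XLevel (hD : MoranData d J n r R)
    (M : MoranStructure d J n r) (hρ : 0 < ρ) (hball : ball x₀ ρ ⊆ J)
    {k : ℕ} (hk : k ≠ 0) {A : Set (List ℕ)} (hA : A ⊆ XLevel n r R k) {p : Pt d} {L : ℝ}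
    (hL : 0 ≤ L) (hsub : ∀ u ∈ A, M.Jset u ⊆ closedBall p (L * R ^ k)) :
    A.Finite ∧ A.ncard ≤ ⌊(L / (ρ * R)) ^ d⌋₊ := by
  have hR := hD.R_pos
  have hcentre : ∀ u ∈ A, ∃ y, ball y (ρ * R ^ (k + 1)) ⊆ M.Jset u := fun u hu => by
    obtain ⟨y, hy⟩ :=
      exists_ball_subset_Jset M hD.diam_pos hball (hD.of_mem_XLevel hk (hA hu)).1
    refine ⟨y, (ball_subset_ball ?_).trans hy⟩
    rw [mul_comm]
    exact mul_le_mul_of_nonneg_right (hD.pow_succ_lt_prodR hk (hA hu)).le hρ.le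
  choose! c hc using hcentre
  have hdisj : A.PairwiseDisjoint fun u => ball (c u) (ρ * R ^ (k + 1)) := by
    intro u hu v hv huv
    have hu' := hA hu
    have hv' := hA hv
    exact (disjoint_interior_Jset M (hD.of_mem_XLevel hk hu').1 (hD.of_mem_XLevel hk hv').1
      (fun h => huv (hD.eq_of_prefix_of_mem_XLevel hk le_rfl hu' hv' h))
      (fun h => huv (hD.eq_of_prefix_of_mem_XLevel hk le_rfl hv' hu' h).symm)).mono
      (interior_maximal (hc u hu) isOpen_ball) (interior_maximal (hc v hv) isOpen_ball)
  have hratio : L * R ^ k / (ρ * R ^ (k + 1)) = L / (ρ * R) := by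
    field_simp
    ring
  have h := Set.finite_and_ncard_le_of_pairwiseDisjoint_ball (by positivity) (by positivity)
    hdisj fun u hu => (hc u hu).trans (hsub u hu)
  rwa [hratio, finrank_euclideanSpace_fin] at h

theorem MoranData.children_finite_and_ncard_le (hD : MoranData d J n r R)
    (M : MoranStructure d J n r) (hρ : 0 < ρ) (hball : ball x₀ ρ ⊆ J)
    (hx : x ∈ XLevel n r R m) :
    {y | IsParent n r R x y}.Finite ∧
      {y | IsParent n r R x y}.ncard ≤ ⌊(diam J / R / (ρ * R)) ^ d⌋₊ := by
  obtain ⟨p, hp⟩ : (M.Jset x).Nonempty := by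
    obtain ⟨y, hy⟩ := exists_ball_subset_Jset M hD.diam_pos hball
      (hD.isWord_and_prodR_le_of_mem_XLevel hx).1
    exact ⟨y, hy (mem_ball_self (mul_pos (prodR_pos hD.r_pos _) hρ))⟩
  refine hD.finite_and_ncard_le_of_subset_XLevel M hρ hball (Nat.succ_ne_zero m) (p := p)
    (fun y hy => (hD.mem_XLevel_of_isParent hx hy).1) (div_nonneg diam_nonneg hD.R_pos.le)
    fun y hy => ?_
  obtain ⟨hy, t, rfl⟩ := hD.mem_XLevel_of_isParent hx hy
  have hJ : diam J / R * R ^ (m + 1) = diam J * R ^ m := by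
    field_simp [hD.R_pos.ne']
    ring
  rw [hJ]
  exact (Jset_append_subset M (hD.isWord_and_prodR_le_of_mem_XLevel hy).1).trans
    (hD.Jset_subset_closedBall M hx hp)

theorem MoranData.ehor_finite_and_ncard_le (hD : MoranData d J n r R)
    (M : MoranStructure d J n r) (hρ : 0 < ρ) (hball : ball x₀ ρ ⊆ J)
    (hx : x ∈ XLevel n r R m) :
    {y | Ehor M R x y}.Finite ∧ {y | Ehor M R x y}.ncard ≤ ⌊(2 * diam J / (ρ * R)) ^ d⌋₊ := by
  rcases {y | Ehor M R x y}.eq_empty_or_nonempty with h | ⟨y₀, hy₀⟩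
  · simp [h]
  have hm := (hD.mem_XLevel_of_ehor M hx hy₀).1
  obtain ⟨p, hp⟩ : (M.Jset x).Nonempty := (hD.mem_XLevel_of_ehor M hx hy₀).2.2.mono
    inter_subset_left
  refine hD.finite_and_ncard_le_of_subset_XLevel M hρ hball hm (p := p)
    (fun y hy => (hD.mem_XLevel_of_ehor M hx hy).2.1) (by positivity [hD.diam_pos]) fun y hy => ?_
  obtain ⟨-, hy, q, hqx, hqy⟩ := hD.mem_XLevel_of_ehor M hx hy
  have hq : dist q p ≤ diam J * R ^ m := hD.Jset_subset_closedBall M hx hp hqx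
  refine (hD.Jset_subset_closedBall M hy hqy).trans (closedBall_subset_closedBall' ?_)
  linarith

end Neighbours

end MoranPaper

/-- the induced augmented tree has uniformly bounded vertex degrees;
in particular it is locally finite. -/
theorem MoranPaper.statement1 (d : ℕ) (J : Set (MoranPaper.Pt d)) (n : ℕ → ℕ) (r : ℕ → ℝ)
    (R : ℝ) (hD : MoranPaper.MoranData d J n r R) (M : MoranPaper.MoranStructure d J n r) :
    ∃ C : ℕ, ∀ x ∈ MoranPaper.XV n r R,
      ((MoranPaper.AugGraph M R).neighborSet x).Finite ∧
      ((MoranPaper.AugGraph M R).neighborSet x).ncard ≤ C := by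
  obtain ⟨x₀, ρ, hρ, hball⟩ := hD.exists_ball_subset
  refine ⟨⌊(Metric.diam J / R / (ρ * R)) ^ d⌋₊ + 1 + ⌊(2 * Metric.diam J / (ρ * R)) ^ d⌋₊,
    fun x hx => ?_⟩
  obtain ⟨m, hxm⟩ := Set.mem_iUnion.mp hx
  obtain ⟨hCfin, hCcard⟩ := hD.children_finite_and_ncard_le M hρ hball hxm
  obtain ⟨hPfin, hPcard⟩ := hD.parents_finite_and_ncard_le_one x
  obtain ⟨hHfin, hHcard⟩ := hD.ehor_finite_and_ncard_le M hρ hball hxm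
  rw [MoranPaper.neighborSet_augGraph]
  refine ⟨(hCfin.union hPfin).union hHfin, ?_⟩
  grw [Set.ncard_union_le, Set.ncard_union_le, hCcard, hPcard, hHcard]
end

section
/- Suppose J is connected and r_k ≡ r for all k (so X_n = D_n for all n), and the Moran structure satisfies conditions (v) and (vi). Then the induced augmented tree (X, 𝔈) is rearrangeable. -/
open Metric Set Filter

attribute [local instance] Classical.propDecidable

/-!
With a constant ratio, the level `X_m` is the set `D_m` of words of length `m`, and
`Σ_m = {[1], …, [n_{m+1}]}`. Since the pieces are closed and connected, the union of the pieces
of a horizontal connected component `T ⊆ X_m` is connected (along intersecting pieces) and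
relatively clopen in `⋃_{D_m} J_i` (by maximality of `T`), i.e. a connected component of it.
Condition (v) then bounds `#T`. Condition (vi) assigns each connected component of the
offspring union to an element of `T`; sending each child `x ∈ TΣ_m` to the owner of the
component containing `J_x` is constant on horizontal components of `TΣ_m`, and as every owner
receives at least `n_{m+1}` of the `#T · n_{m+1}` children, it receives exactly `n_{m+1}`.
-/

section Topology

variable {X ι : Type*} [TopologicalSpace X] {K : ι → Set X}

lemma isPreconnected_biUnion_of_induce_preconnected {G : SimpleGraph ι} {T : Set ι}
    (hG : ∀ i j, G.Adj i j → (K i ∩ K j).Nonempty) (hT : (G.induce T).Preconnected)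
    (hK : ∀ i ∈ T, IsPreconnected (K i)) : IsPreconnected (⋃ i ∈ T, K i) := by
  refine IsPreconnected.biUnion_of_reflTransGen hK fun i hi j hj => ?_
  have hreach := (SimpleGraph.reachable_iff_reflTransGen _ _).1 (hT ⟨i, hi⟩ ⟨j, hj⟩)
  exact hreach.lift Subtype.val fun a b hab => ⟨hG _ _ hab, a.2⟩

noncomputable def componentContaining (U s : Set X) : Set X :=
  if hs : s.Nonempty then connectedComponentIn U hs.some else ∅

lemma componentContaining_eq {U s t : Set X} (ht : IsPreconnected t) (htU : t ⊆ U)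
    (hst : s ⊆ t) (hs : s.Nonempty) {q : X} (hq : q ∈ t) :
    componentContaining U s = connectedComponentIn U q := by
  rw [componentContaining, dif_pos hs]
  exact connectedComponentIn_eq (ht.subset_connectedComponentIn (hst hs.some_mem) htU hq)

lemma MoranPaper.isRelCC_biUnion {S T : Set ι} (hS : S.Finite) (hTS : T ⊆ S)
    (hK : ∀ i ∈ S, IsClosed (K i)) (hT : IsPreconnected (⋃ i ∈ T, K i))
    (hne : (⋃ i ∈ T, K i).Nonempty)
    (hsep : ∀ i ∈ T, ∀ j ∈ S, (K i ∩ K j).Nonempty → j ∈ T) :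
    MoranPaper.IsRelCC (⋃ i ∈ T, K i) (⋃ i ∈ S, K i) := by
  obtain ⟨x, hx⟩ := hne
  have hTS' : (⋃ i ∈ T, K i) ⊆ ⋃ i ∈ S, K i := biUnion_subset_biUnion_left hTS
  refine ⟨x, hTS' hx, (hT.subset_connectedComponentIn hx hTS').antisymm ?_⟩
  have hcover : (⋃ i ∈ S, K i) ⊆ (⋃ i ∈ T, K i) ∪ ⋃ i ∈ S \ T, K i := by
    rw [← biUnion_union, union_sdiff_self]
    exact biUnion_subset_biUnion_left subset_union_right
  have hdisj : Disjoint (⋃ i ∈ T, K i) (⋃ i ∈ S \ T, K i) := by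
    refine Set.disjoint_left.2 fun y hy hy' => ?_
    obtain ⟨i, hi, hyi⟩ := mem_iUnion₂.1 hy
    obtain ⟨j, ⟨hjS, hjT⟩, hyj⟩ := mem_iUnion₂.1 hy'
    exact hjT (hsep i hi j hjS ⟨y, hyi, hyj⟩)
  rcases isPreconnected_iff_subset_of_disjoint_closed.1 isPreconnected_connectedComponentIn _ _
      ((hS.subset hTS).isClosed_biUnion fun i hi => hK i (hTS hi))
      ((hS.subset sdiff_subset).isClosed_biUnion fun i hi => hK i hi.1)
      ((connectedComponentIn_subset _ _).trans hcover) (by rw [hdisj.inter_eq, inter_empty])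
    with h | h
  · exact h
  · exact absurd (h (mem_connectedComponentIn (hTS' hx))) (hdisj.notMem_of_mem_left hx)

end Topology

lemma Set.ncard_fiber_eq_of_le {α β : Type*} {s : Set α} {t : Set β} {g : α → β} {c : ℕ}
    (hs : s.Finite) (ht : t.Finite) (hg : MapsTo g s t) (hcard : s.ncard = t.ncard * c)
    (hle : ∀ j ∈ t, c ≤ {x ∈ s | g x = j}.ncard) {j : β} (hj : j ∈ t) :
    {x ∈ s | g x = j}.ncard = c := by
  lift s to Finset α using hs
  lift t to Finset β using ht
  have hfiber : ∀ j, {x ∈ (s : Set α) | g x = j}.ncard = (s.filter (g · = j)).card := by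
    intro j
    rw [← ncard_coe_finset, Finset.coe_filter]
    rfl
  simp only [hfiber, ncard_coe_finset] at hcard hle ⊢
  have hsum : ∑ _j ∈ t, c = ∑ j ∈ t, (s.filter (g · = j)).card := by
    rw [Finset.sum_const, smul_eq_mul, ← hcard, Finset.card_eq_sum_card_fiberwise hg]
  exact ((Finset.sum_eq_sum_iff_of_le hle).1 hsum j hj).symm

namespace MoranPaper

variable {d : ℕ} {J : Set (Pt d)} {n : ℕ → ℕ}

section Words

lemma isWord_append_singleton {w : List ℕ} {a : ℕ} :
    IsWord n (w ++ [a]) ↔ IsWord n w ∧ 1 ≤ a ∧ a ≤ n w.length := by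
  simp only [IsWord, List.get_eq_getElem, List.length_append, List.length_singleton]
  constructor
  · intro h
    refine ⟨fun j hj => ?_, ?_⟩
    · simpa [List.getElem_append_left hj] using h j (by omega)
    · simpa using h w.length (by omega)
  · intro ⟨hw, ha⟩ j hj
    rcases Nat.lt_or_ge j w.length with hlt | hge
    · simpa [List.getElem_append_left hlt] using hw j hlt
    · obtain rfl : j = w.length := by omega
      simpa using ha

lemma wordsLen_zero : WordsLen n 0 = {[]} := by
  ext w
  simp only [WordsLen, mem_ofPred_eq, List.length_eq_zero_iff, mem_singleton_iff,
    and_iff_right_iff_imp]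
  rintro rfl j hj
  simp at hj

lemma wordsLen_succ (m : ℕ) :
    WordsLen n (m + 1) =
      (fun p : List ℕ × ℕ => p.1 ++ [p.2]) '' (WordsLen n m ×ˢ Icc 1 (n m)) := by
  ext w
  constructor
  · rintro ⟨hw, hlen⟩
    obtain rfl | ⟨u, a, rfl⟩ := w.eq_nil_or_concat'
    · simp at hlen
    obtain ⟨hu, ha⟩ := isWord_append_singleton.1 hw
    simp only [List.length_append, List.length_singleton, Nat.add_right_cancel_iff] at hlen
    exact ⟨(u, a), ⟨⟨hu, hlen⟩, hlen ▸ ha⟩, rfl⟩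
  · rintro ⟨⟨u, a⟩, ⟨⟨hu, rfl⟩, ha⟩, rfl⟩
    exact ⟨isWord_append_singleton.2 ⟨hu, ha⟩, by simp⟩

lemma wordsLen_finite (m : ℕ) : (WordsLen n m).Finite := by
  induction m with
  | zero => simp [wordsLen_zero]
  | succ m ih => simpa [wordsLen_succ] using (ih.prod (finite_Icc 1 (n m))).image _

lemma injOn_append_singleton (m : ℕ) :
    InjOn (fun p : List ℕ × ℕ => p.1 ++ [p.2]) {p | p.1.length = m} := by
  intro p hp q hq hpq
  obtain ⟨h1, h2⟩ := List.append_inj hpq (hp.trans hq.symm)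
  exact Prod.ext h1 (by simpa using h2)

end Words

section Pieces

variable {r : ℕ → ℝ} (M : MoranStructure d J n r) {w : List ℕ}

lemma MoranStructure.exists_continuous_image (hw : IsWord n w) :
    ∃ S : Pt d → Pt d, Continuous S ∧ M.Jset w = S '' J := by
  obtain ⟨S, c, -, hS, hw⟩ := M.similar w hw
  refine ⟨S, LipschitzWith.continuous (K := c.toNNReal) ?_, hw⟩
  refine LipschitzWith.of_dist_le_mul fun x y => ?_
  rw [hS]
  gcongr
  exact Real.le_coe_toNNReal c

lemma MoranStructure.isCompact_jset (hJ : IsCompact J) (hw : IsWord n w) :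
    IsCompact (M.Jset w) := by
  obtain ⟨S, hS, hw⟩ := M.exists_continuous_image hw
  exact hw ▸ hJ.image hS

lemma MoranStructure.isPreconnected_jset (hJ : IsPreconnected J) (hw : IsWord n w) :
    IsPreconnected (M.Jset w) := by
  obtain ⟨S, hS, hw⟩ := M.exists_continuous_image hw
  exact hw ▸ hJ.image S hS.continuousOn

lemma MoranStructure.jset_nonempty (hJ : J.Nonempty) (hw : IsWord n w) :
    (M.Jset w).Nonempty := by
  obtain ⟨S, -, hw⟩ := M.exists_continuous_image hw
  exact hw ▸ hJ.image S

lemma isWord_of_mem_xLevel {R : ℝ} {m : ℕ} (hw : w ∈ XLevel n r R m) : IsWord n w := by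
  unfold XLevel at hw
  split_ifs at hw
  · rw [mem_singleton_iff.1 hw]
    intro j hj
    simp at hj
  · exact hw.1

variable {M} {R : ℝ} {T : Set (List ℕ)}

lemma IsHCC.nonempty (hT : IsHCC M R T) : T.Nonempty := by
  obtain ⟨-, -, hconn, -⟩ := hT
  obtain ⟨⟨i, hi⟩⟩ := hconn.nonempty
  exact ⟨i, hi⟩

lemma IsHCC.isPreconnected_biUnion (hJ : IsPreconnected J) (hT : IsHCC M R T) :
    IsPreconnected (⋃ i ∈ T, M.Jset i) := by
  obtain ⟨_, hTm, hconn, -⟩ := hT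
  exact isPreconnected_biUnion_of_induce_preconnected (G := HorGraph M R)
    (fun _ _ ⟨_, _, _, _, _, hab⟩ => hab) hconn.preconnected
    fun i hi => M.isPreconnected_jset hJ (isWord_of_mem_xLevel (hTm hi))

end Pieces

section ConstantRatio

variable {ρ : ℝ}

lemma xLevel_const (hρ0 : 0 < ρ) (hρ1 : ρ < 1) (m : ℕ) :
    XLevel n (fun _ => ρ) ρ m = WordsLen n m := by
  rcases Nat.eq_zero_or_pos m with rfl | hm
  · simp [XLevel, wordsLen_zero]
  have anti : StrictAnti (ρ ^ · : ℕ → ℝ) := pow_right_strictAnti₀ hρ0 hρ1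
  ext w
  simp only [XLevel, if_neg hm.ne', WordsLen, prodR, Finset.prod_const, Finset.card_range,
    mem_ofPred_eq, and_congr_right_iff]
  intro _
  rw [anti.le_iff_ge, anti.lt_iff_gt]
  omega

lemma sigmaSet_const (hρ0 : 0 < ρ) (hρ1 : ρ < 1) (hm : (WordsLen n m).Nonempty) :
    SigmaSet n (fun _ => ρ) ρ m = (fun a => [a]) '' Icc 1 (n m) := by
  ext w
  simp only [SigmaSet, xLevel_const hρ0 hρ1]
  constructor
  · rintro ⟨u, ⟨-, rfl⟩, huw, hlen⟩
    obtain ⟨a, rfl⟩ : ∃ a, w = [a] :=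
      List.length_eq_one_iff.1 (by simpa using hlen)
    exact ⟨a, (isWord_append_singleton.1 huw).2, rfl⟩
  · rintro ⟨a, ha, rfl⟩
    obtain ⟨u, hu, rfl⟩ := hm
    exact ⟨u, ⟨hu, rfl⟩, isWord_append_singleton.2 ⟨hu, ha⟩, by simp⟩

lemma ncard_sigmaSet_const (hρ0 : 0 < ρ) (hρ1 : ρ < 1) (hm : (WordsLen n m).Nonempty) :
    (SigmaSet n (fun _ => ρ) ρ m).ncard = n m := by
  rw [sigmaSet_const hρ0 hρ1 hm, ncard_image_of_injective _ List.singleton_injective,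
    Set.ncard_Icc_nat]
  omega

lemma tSigma_const (hρ0 : 0 < ρ) (hρ1 : ρ < 1)
    (hT : T ⊆ WordsLen n m) :
    TSigma n (fun _ => ρ) ρ m T =
      (fun p : List ℕ × ℕ => p.1 ++ [p.2]) '' (T ×ˢ Icc 1 (n m)) := by
  ext x
  constructor
  · rintro ⟨u, hu, w, hw, rfl⟩
    rw [sigmaSet_const hρ0 hρ1 ⟨u, hT hu⟩] at hw
    obtain ⟨a, ha, rfl⟩ := hw
    exact ⟨(u, a), ⟨hu, ha⟩, rfl⟩
  · rintro ⟨⟨u, a⟩, ⟨hu, ha⟩, rfl⟩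
    refine ⟨u, hu, [a], ?_, rfl⟩
    rw [sigmaSet_const hρ0 hρ1 ⟨u, hT hu⟩]
    exact mem_image_of_mem _ ha

lemma ncard_tSigma_const (hρ0 : 0 < ρ) (hρ1 : ρ < 1)
    (hT : T ⊆ WordsLen n m) :
    (TSigma n (fun _ => ρ) ρ m T).ncard = T.ncard * n m := by
  rw [tSigma_const hρ0 hρ1 hT, InjOn.ncard_image, ncard_prod, Set.ncard_Icc_nat,
    Nat.add_sub_cancel]
  exact (injOn_append_singleton m).mono fun p hp => (hT hp.1).2

lemma tSigma_const_subset (hρ0 : 0 < ρ) (hρ1 : ρ < 1)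
    (hT : T ⊆ WordsLen n m) : TSigma n (fun _ => ρ) ρ m T ⊆ WordsLen n (m + 1) := by
  rw [tSigma_const hρ0 hρ1 hT, wordsLen_succ]
  exact image_mono (prod_mono hT subset_rfl)

lemma finite_tSigma_const (hρ0 : 0 < ρ) (hρ1 : ρ < 1)
    (hT : T ⊆ WordsLen n m) : (TSigma n (fun _ => ρ) ρ m T).Finite :=
  (wordsLen_finite (m + 1)).subset (tSigma_const_subset hρ0 hρ1 hT)

variable {M : MoranStructure d J n (fun _ => ρ)}

lemma IsHCC.mem_of_inter_nonempty (hρ0 : 0 < ρ) (hρ1 : ρ < 1) (hT : IsHCC M ρ T)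
    (hTm : T ⊆ WordsLen n m) {a b : List ℕ} (ha : a ∈ T) (hb : b ∈ WordsLen n m)
    (hab : (M.Jset a ∩ M.Jset b).Nonempty) : b ∈ T := by
  obtain ⟨m', hTm', hconn, hmax⟩ := hT
  simp only [xLevel_const hρ0 hρ1] at hTm' hmax
  obtain rfl : m = m' := (hTm ha).2.symm.trans (hTm' ha).2
  by_cases hba : b = a
  · exact hba ▸ ha
  have hm : m ≠ 0 := by
    rintro rfl
    rw [wordsLen_zero] at hTm hb
    exact hba (hb.trans (hTm ha).symm)
  have hadj : (HorGraph M ρ).Adj a b := by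
    refine ⟨Ne.symm hba, m, Nat.one_le_iff_ne_zero.2 hm, ?_, ?_, hab⟩ <;>
      rw [xLevel_const hρ0 hρ1]
    exacts [hTm ha, hb]
  have hconn' : ((HorGraph M ρ).induce (T ∪ {b})).Connected :=
    SimpleGraph.connected_induce_union hconn.preconnected
      SimpleGraph.Preconnected.of_subsingleton ha rfl hadj
  rw [← hmax _ subset_union_left (union_subset hTm (singleton_subset_iff.2 hb)) hconn']
  exact mem_union_right _ rfl

lemma IsHCC.isRelCC (hρ0 : 0 < ρ) (hρ1 : ρ < 1) (hJc : IsCompact J) (hJ : IsConnected J)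
    (hT : IsHCC M ρ T) (hTm : T ⊆ WordsLen n m) :
    IsRelCC (⋃ i ∈ T, M.Jset i) (⋃ i ∈ WordsLen n m, M.Jset i) := by
  obtain ⟨i, hi⟩ := hT.nonempty
  obtain ⟨x, hx⟩ := M.jset_nonempty hJ.nonempty (hTm hi).1
  exact isRelCC_biUnion (wordsLen_finite m) hTm
    (fun j hj => (M.isCompact_jset hJc hj.1).isClosed)
    (hT.isPreconnected_biUnion hJ.isPreconnected) ⟨x, mem_biUnion hi hx⟩
    fun a ha b hb hab => hT.mem_of_inter_nonempty hρ0 hρ1 hTm ha hb hab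

lemma jset_subset_offspring (hρ0 : 0 < ρ) (hρ1 : ρ < 1) (hTm : T ⊆ WordsLen n m)
    {x : List ℕ} (hx : x ∈ TSigma n (fun _ => ρ) ρ m T) :
    M.Jset x ⊆ ⋃ u ∈ T, ⋃ j ∈ Icc 1 (n m), M.Jset (u ++ [j]) := by
  rw [tSigma_const hρ0 hρ1 hTm] at hx
  obtain ⟨⟨u, j⟩, ⟨hu, hj⟩, rfl⟩ := hx
  exact fun y hy => mem_biUnion hu (mem_biUnion hj hy)

lemma le_ncard_owner_fiber (hρ0 : 0 < ρ) (hρ1 : ρ < 1) (hJ : IsConnected J)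
    (hTm : T ⊆ WordsLen n m) {U : Set (Pt d)}
    (hU : U = ⋃ u ∈ T, ⋃ j ∈ Icc 1 (n m), M.Jset (u ++ [j]))
    {f : Set (Pt d) → List ℕ} {i : List ℕ} {W : Finset (List ℕ × ℕ)}
    (hWT : ∀ q ∈ W, q.1 ∈ T ∧ 1 ≤ q.2 ∧ q.2 ≤ n m) (hWcard : W.card = n m)
    (hWU : ⋃ C ∈ {C | IsRelCC C U ∧ f C = i}, C = ⋃ q ∈ W, M.Jset (q.1 ++ [q.2])) :
    n m ≤
      {x ∈ TSigma n (fun _ => ρ) ρ m T | f (componentContaining U (M.Jset x)) = i}.ncard := by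
  have hWS : ∀ q ∈ W, q.1 ++ [q.2] ∈ TSigma n (fun _ => ρ) ρ m T := fun q hq =>
    tSigma_const hρ0 hρ1 hTm ▸ ⟨q, ⟨(hWT q hq).1, (hWT q hq).2⟩, rfl⟩
  have hWf : ∀ q ∈ W, f (componentContaining U (M.Jset (q.1 ++ [q.2]))) = i := by
    intro q hq
    have hword := (tSigma_const_subset hρ0 hρ1 hTm (hWS q hq)).1
    obtain ⟨y, hy⟩ := M.jset_nonempty hJ.nonempty hword
    have hyC : y ∈ ⋃ C ∈ {C | IsRelCC C U ∧ f C = i}, C := hWU ▸ mem_biUnion hq hy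
    obtain ⟨C, ⟨⟨z, -, rfl⟩, hCi⟩, hyC⟩ := mem_iUnion₂.1 hyC
    rw [componentContaining_eq (M.isPreconnected_jset hJ.isPreconnected hword)
      (hU ▸ jset_subset_offspring hρ0 hρ1 hTm (hWS q hq)) subset_rfl ⟨y, hy⟩ hy,
      ← connectedComponentIn_eq hyC, hCi]
  calc n m = ((fun q : List ℕ × ℕ => q.1 ++ [q.2]) '' W).ncard := by
        rw [InjOn.ncard_image, ncard_coe_finset, hWcard]
        exact (injOn_append_singleton m).mono fun q hq => (hTm (hWT q hq).1).2
    _ ≤ {x ∈ TSigma n (fun _ => ρ) ρ m T | f (componentContaining U (M.Jset x)) = i}.ncard :=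
      ncard_le_ncard (image_subset_iff.2 fun q hq => ⟨hWS q hq, hWf q hq⟩)
        ((finite_tSigma_const hρ0 hρ1 hTm).sep _)

lemma IsHCC.exists_rearrangement (hρ0 : 0 < ρ) (hρ1 : ρ < 1) (hJc : IsCompact J)
    (hJ : IsConnected J) (hVI : CondVI M) (hT : IsHCC M ρ T) (hTm : T ⊆ WordsLen n m) :
    ∃ g : List ℕ → List ℕ,
      (∀ x ∈ TSigma n (fun _ => ρ) ρ m T, g x ∈ T) ∧
      (∀ Z, IsHCC M ρ Z → Z ⊆ TSigma n (fun _ => ρ) ρ m T →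
        ∀ x ∈ Z, ∀ y ∈ Z, g x = g y) ∧
      (∀ i ∈ T, {x ∈ TSigma n (fun _ => ρ) ρ m T | g x = i}.ncard =
        (SigmaSet n (fun _ => ρ) ρ m).ncard) := by
  obtain ⟨f, hfT, hfW⟩ := hVI (m + 1) (by omega) T (by simpa using hTm)
    (by simpa using hT.isRelCC hρ0 hρ1 hJc hJ hTm)
  simp only [Nat.add_sub_cancel] at hfT hfW
  set U := ⋃ u ∈ T, ⋃ j ∈ Icc 1 (n m), M.Jset (u ++ [j]) with hU
  set S := TSigma n (fun _ => ρ) ρ m T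
  have hSU : ∀ x ∈ S, M.Jset x ⊆ U := fun x hx => jset_subset_offspring hρ0 hρ1 hTm hx
  have hSne : ∀ x ∈ S, (M.Jset x).Nonempty := fun x hx =>
    M.jset_nonempty hJ.nonempty (tSigma_const_subset hρ0 hρ1 hTm hx).1
  set g : List ℕ → List ℕ := fun x => f (componentContaining U (M.Jset x))
  have hgT : ∀ x ∈ S, g x ∈ T := fun x hx => by
    obtain ⟨q, hq⟩ := hSne x hx
    have hpre := M.isPreconnected_jset hJ.isPreconnected (tSigma_const_subset hρ0 hρ1 hTm hx).1
    exact hfT _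
      ⟨q, hSU x hx hq, componentContaining_eq hpre (hSU x hx) subset_rfl ⟨q, hq⟩ hq⟩
  refine ⟨g, hgT, fun Z hZ hZS x hx y hy => ?_, fun i hi => ?_⟩
  · obtain ⟨q, hq⟩ := hSne y (hZS hy)
    have hZU : (⋃ z ∈ Z, M.Jset z) ⊆ U := iUnion₂_subset fun z hz => hSU z (hZS hz)
    have hZ' := hZ.isPreconnected_biUnion hJ.isPreconnected
    simp only [g, componentContaining_eq hZ' hZU (subset_biUnion_of_mem hx) (hSne x (hZS hx))
      (mem_biUnion hy hq), componentContaining_eq hZ' hZU (subset_biUnion_of_mem hy) ⟨q, hq⟩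
      (mem_biUnion hy hq)]
  have hfiber : ∀ i ∈ T, n m ≤ {x ∈ S | g x = i}.ncard := fun i hi => by
    obtain ⟨W, hWT, hWcard, hWU⟩ := hfW i hi
    exact le_ncard_owner_fiber hρ0 hρ1 hJ hTm hU hWT hWcard hWU
  rw [ncard_sigmaSet_const hρ0 hρ1 ⟨_, hTm hi⟩]
  exact Set.ncard_fiber_eq_of_le (finite_tSigma_const hρ0 hρ1 hTm)
    ((wordsLen_finite m).subset hTm) hgT (ncard_tSigma_const hρ0 hρ1 hTm) hfiber hi

end ConstantRatio

end MoranPaper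

theorem MoranPaper.statement10_general (d : ℕ) (J : Set (MoranPaper.Pt d))
    (hJconn : IsConnected J) (hJc : IsCompact J)
    (n : ℕ → ℕ) (ρ : ℝ) (hρ0 : 0 < ρ) (hρ1 : ρ < 1)
    (M : MoranPaper.MoranStructure d J n (fun _ => ρ))
    (hV : MoranPaper.CondV M) (hVI : MoranPaper.CondVI M) :
    MoranPaper.Rearrangeable M ρ := by
  obtain ⟨L, hL⟩ := hV
  refine ⟨⟨L, fun T hT => ?_⟩, fun m T hTm hT => ?_⟩
  · obtain ⟨m, hTm, -⟩ := id hT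
    rw [MoranPaper.xLevel_const hρ0 hρ1] at hTm
    simpa using hL (m + 1) (by omega) T (by simpa using hTm)
      (by simpa using hT.isRelCC hρ0 hρ1 hJc hJconn hTm)
  · rw [MoranPaper.xLevel_const hρ0 hρ1] at hTm
    exact hT.exists_rearrangement hρ0 hρ1 hJc hJconn hVI hTm

/-- if `J` is connected, the ratio is constant, and conditions (v) and (vi)
hold, then the induced augmented tree is rearrangeable. -/
theorem MoranPaper.statement10 (d : ℕ) (hd : 1 ≤ d) (J : Set (MoranPaper.Pt d))
    (hJconn : IsConnected J) (hJc : IsCompact J) (hJint : (interior J).Nonempty)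
    (n : ℕ → ℕ) (hn : ∀ k, 2 ≤ n k) (ρ : ℝ) (hρ0 : 0 < ρ) (hρ1 : ρ < 1)
    (hnρ : ∀ k, (n k : ℝ) * ρ ≤ 1)
    (M : MoranPaper.MoranStructure d J n (fun _ => ρ))
    (hV : MoranPaper.CondV M) (hVI : MoranPaper.CondVI M) :
    MoranPaper.Rearrangeable M ρ :=
  MoranPaper.statement10_general d J hJconn hJc n ρ hρ0 hρ1 M hV hVI
end
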